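/- arXiv:1909.05399 — 3 statements merged into one kernel-verified Lean document; each statement's English description precedes it below -/
import Mathlib

section
/- Let M be a subgroup of ℝ^n equipped with the lexicographic order. Then every convex subgroup of M is of the form {(a_1,…,a_n) ∈ M : a_1 = a_2 = … = a_k = 0} for some 0 ≤ k ≤ n. In particular, M has at most n − 1 nontrivial convex subgroups. -/
/-- The lexicographic order on `Fin n → ℝ`. -/
def lexLe (n : ℕ) (a b : Fin n → ℝ) : Prop :=
  a = b ∨ ∃ i : Fin n, a i < b i ∧ ∀ j : Fin n, j < i → a j = b j

/-- The first index at which some element of `H` is nonzero. -/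
private noncomputable def idx (n : ℕ) (H : AddSubgroup (Fin n → ℝ)) : ℕ :=
  sInf {i : ℕ | ∃ a ∈ H, ∃ h : i < n, a ⟨i, h⟩ ≠ 0}

private lemma idx_mem {n : ℕ} {H : AddSubgroup (Fin n → ℝ)} (hne : H ≠ ⊥) :
    idx n H ∈ {i : ℕ | ∃ a ∈ H, ∃ h : i < n, a ⟨i, h⟩ ≠ 0} := by
  apply Nat.sInf_mem
  have : ∃ a ∈ H, a ≠ 0 := by
    by_contra h
    push_neg at h
    exact hne ((AddSubgroup.eq_bot_iff_forall H).mpr h)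
  obtain ⟨a, haH, ha0⟩ := this
  obtain ⟨i, hi⟩ := Function.ne_iff.mp ha0
  exact ⟨i.val, a, haH, ⟨i.isLt, by simpa using hi⟩⟩

private lemma idx_min {n : ℕ} {H : AddSubgroup (Fin n → ℝ)} (a : Fin n → ℝ)
    (ha : a ∈ H) (j : Fin n) (hj : (j : ℕ) < idx n H) : a j = 0 := by
  by_contra h
  have hmem : (j : ℕ) ∈ {i : ℕ | ∃ a ∈ H, ∃ h : i < n, a ⟨i, h⟩ ≠ 0} :=
    ⟨a, ha, j.isLt, by simpa using h⟩
  have := Nat.sInf_le hmem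
  rw [show sInf {i : ℕ | ∃ a ∈ H, ∃ h : i < n, a ⟨i, h⟩ ≠ 0} = idx n H from rfl] at this
  omega

private lemma key {n : ℕ} {M H : AddSubgroup (Fin n → ℝ)} (hHM : H ≤ M)
    (hconv : ∀ a b c : Fin n → ℝ, a ∈ H → b ∈ H → c ∈ M →
      lexLe n a c → lexLe n c b → c ∈ H) (hne : H ≠ ⊥) :
    (H : Set (Fin n → ℝ)) = {a | a ∈ M ∧ ∀ i : Fin n, (i : ℕ) < idx n H → a i = 0} := by
  ext c
  constructor
  · intro hc
    exact ⟨hHM hc, fun i hi => idx_min c hc i hi⟩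
  · rintro ⟨hcM, hc0⟩
    obtain ⟨b, hbH, hk, hb0⟩ := idx_mem hne
    set κ : Fin n := ⟨idx n H, hk⟩ with hκ
    have hwlog : ∃ b', b' ∈ H ∧ 0 < b' κ ∧ ∀ j : Fin n, (j : ℕ) < idx n H → b' j = 0 := by
      rcases lt_or_gt_of_ne hb0 with h | h
      · exact ⟨-b, neg_mem hbH, by simpa using h,
          fun j hj => by simp [idx_min b hbH j hj]⟩
      · exact ⟨b, hbH, h, fun j hj => idx_min b hbH j hj⟩
    obtain ⟨d, hdH, hdpos, hdz⟩ := hwlog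
    obtain ⟨m, hm⟩ := exists_nat_gt (|c κ| / d κ)
    have hm' : |c κ| < (m : ℝ) * d κ := by
      rwa [div_lt_iff₀ hdpos] at hm
    have hsmul : ∀ j : Fin n, (m • d) j = (m : ℝ) * d j := by
      intro j; simp [nsmul_eq_mul]
    have h1 : c κ < (m • d) κ := by
      rw [hsmul]; exact lt_of_le_of_lt (le_abs_self _) hm'
    have h2 : (-(m • d)) κ < c κ := by
      have : -((m : ℝ) * d κ) < c κ :=
        lt_of_lt_of_le (neg_lt_neg hm') (neg_abs_le _)
      simpa [hsmul] using this
    have hzero : ∀ j : Fin n, j < κ → (m • d) j = 0 := by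
      intro j hj
      rw [hsmul, hdz j hj, mul_zero]
    have le1 : lexLe n (-(m • d)) c := by
      refine Or.inr ⟨κ, h2, fun j hj => ?_⟩
      rw [Pi.neg_apply, hzero j hj, hc0 j hj, neg_zero]
    have le2 : lexLe n c (m • d) := by
      refine Or.inr ⟨κ, h1, fun j hj => ?_⟩
      rw [hzero j hj, hc0 j hj]
    exact hconv _ _ _ (neg_mem (nsmul_mem hdH m)) (nsmul_mem hdH m) hcM le1 le2

/-- For a subgroup `M` of `ℝ^n` with the lexicographic order, every
convex subgroup of `M` has the form `{a ∈ M | a_1 = ⋯ = a_k = 0}` for some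
`0 ≤ k ≤ n`; in particular `M` has at most `n - 1` nontrivial convex subgroups. -/
theorem convex_subgroup_lex_form (n : ℕ) (M H : AddSubgroup (Fin n → ℝ)) (hHM : H ≤ M)
    (hconv : ∀ a b c : Fin n → ℝ, a ∈ H → b ∈ H → c ∈ M →
      lexLe n a c → lexLe n c b → c ∈ H) :
    (∃ k : ℕ, k ≤ n ∧
      (H : Set (Fin n → ℝ)) = {a | a ∈ M ∧ ∀ i : Fin n, (i : ℕ) < k → a i = 0}) ∧
    ∀ S : Finset (AddSubgroup (Fin n → ℝ)),
      (∀ K ∈ S, K ≤ M ∧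
        (∀ a b c : Fin n → ℝ, a ∈ K → b ∈ K → c ∈ M →
          lexLe n a c → lexLe n c b → c ∈ K) ∧ K ≠ ⊥ ∧ K ≠ M) →
      S.card ≤ n - 1 := by
  constructor
  · by_cases hbot : H = ⊥
    · refine ⟨n, le_refl n, ?_⟩
      subst hbot
      ext a
      simp only [AddSubgroup.coe_bot, Set.mem_singleton_iff, Set.mem_setOf_eq]
      constructor
      · rintro rfl
        exact ⟨zero_mem M, fun i _ => rfl⟩
      · rintro ⟨_, h⟩
        exact funext fun i => h i i.isLt
    · obtain ⟨_, _, hk, _⟩ := idx_mem hbot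
      exact ⟨idx n H, hk.le, key hHM hconv hbot⟩
  · intro S hS
    rcases S.eq_empty_or_nonempty with rfl | ⟨K0, hK0⟩
    · simp
    · have hK0' := hS K0 hK0
      have hMne : M ≠ ⊥ := by
        intro h
        exact hK0'.2.2.1 (le_bot_iff.mp (h ▸ hK0'.1))
      obtain ⟨_, _, hm0n, _⟩ := idx_mem hMne
      have hgt : ∀ K ∈ S, idx n M < idx n K := by
        intro K hK
        obtain ⟨hKM, hKconv, hKbot, hKne⟩ := hS K hK
        by_contra h
        push_neg at h
        apply hKne
        apply SetLike.coe_injective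
        rw [key hKM hKconv hKbot]
        ext a
        simp only [Set.mem_setOf_eq, SetLike.mem_coe]
        exact ⟨fun ha => ha.1, fun ha => ⟨ha, fun i hi => idx_min a ha i (lt_of_lt_of_le hi h)⟩⟩
      have hinj : Set.InjOn (fun K => idx n K) S := by
        intro K hK K' hK' he
        obtain ⟨hKM, hKconv, hKbot, _⟩ := hS K hK
        obtain ⟨hKM', hKconv', hKbot', _⟩ := hS K' hK'
        apply SetLike.coe_injective
        rw [key hKM hKconv hKbot, key hKM' hKconv' hKbot']
        simp only at he
        rw [he]
      have hmaps : ∀ K ∈ S, idx n K ∈ Finset.Ioo (idx n M) n := by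
        intro K hK
        obtain ⟨_, _, hkn, _⟩ := idx_mem (hS K hK).2.2.1
        exact Finset.mem_Ioo.mpr ⟨hgt K hK, hkn⟩
      calc S.card ≤ (Finset.Ioo (idx n M) n).card :=
            Finset.card_le_card_of_injOn _ hmaps hinj
        _ = n - idx n M - 1 := Nat.card_Ioo _ _
        _ ≤ n - 1 := by omega
end

section
/- Let K be an ordered field and H a nontrivial convex subgroup of the additive group of K. Then the set O = {a ∈ K : aH ⊆ H} is a convex subring of K which is neither {0} nor all of K, and O is a valuation ring of K: for every nonzero a ∈ K, either a ∈ O or a^{-1} ∈ O. -/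
/-!
Multiplication by an element of absolute value at most `1` does not increase absolute values,
so it maps the convex symmetric set `H` into itself; hence every `a` with `|a| ≤ 1` lies in `O`,
and since `|a| ≤ 1` or `|a⁻¹| ≤ 1`, `O` is a valuation ring. Convexity of `O` follows by
multiplying an inequality `a ≤ c ≤ b` by a fixed `h ∈ H`. Finally `O ≠ K`, since
`x / h₀ ∉ O` for `h₀ ∈ H` nonzero and `x ∉ H`.
-/

namespace AddSubgroup

def multipliers {R : Type*} [Ring R] (H : AddSubgroup R) : Subring R where
  carrier := {a | ∀ h ∈ H, a * h ∈ H}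
  one_mem' h hh := by rwa [one_mul]
  mul_mem' ha hb h hh := by rw [mul_assoc]; exact ha _ (hb h hh)
  zero_mem' h _ := by rw [zero_mul]; exact H.zero_mem
  add_mem' ha hb h hh := by rw [add_mul]; exact H.add_mem (ha h hh) (hb h hh)
  neg_mem' ha h hh := by rw [neg_mul]; exact H.neg_mem (ha h hh)

theorem mem_of_abs_le {G : Type*} [AddCommGroup G] [LinearOrder G] [IsOrderedAddMonoid G]
    {H : AddSubgroup G} (hH : (H : Set G).OrdConnected) {h x : G} (hh : h ∈ H)
    (hx : |x| ≤ |h|) : x ∈ H :=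
  hH.out (H.neg_mem (abs_mem_iff.2 hh)) (abs_mem_iff.2 hh) (abs_le.1 hx)

section OrderedRing

variable {R : Type*} [Ring R] [LinearOrder R] [IsOrderedRing R] {H : AddSubgroup R}

theorem mem_multipliers_of_abs_le_one (hH : (H : Set R).OrdConnected) {a : R} (ha : |a| ≤ 1) :
    a ∈ H.multipliers := fun h hh =>
  mem_of_abs_le hH hh <| by
    rw [abs_mul]; exact mul_le_of_le_one_left (abs_nonneg h) ha

theorem ordConnected_multipliers (hH : (H : Set R).OrdConnected) :
    (H.multipliers : Set R).OrdConnected := by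
  refine ⟨fun a ha b hb c ⟨hac, hcb⟩ h hh => ?_⟩
  rcases le_total 0 h with h0 | h0
  · exact hH.out (ha h hh) (hb h hh)
      ⟨mul_le_mul_of_nonneg_right hac h0, mul_le_mul_of_nonneg_right hcb h0⟩
  · exact hH.out (hb h hh) (ha h hh)
      ⟨mul_le_mul_of_nonpos_right hcb h0, mul_le_mul_of_nonpos_right hac h0⟩

end OrderedRing

theorem multipliers_ne_top {K : Type*} [DivisionRing K] {H : AddSubgroup K} (hbot : H ≠ ⊥)
    (htop : H ≠ ⊤) : H.multipliers ≠ ⊤ := by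
  intro hO
  obtain ⟨h₀, hh₀, h₀_ne⟩ := H.bot_or_exists_ne_zero.resolve_left hbot
  obtain ⟨x, hx⟩ := SetLike.exists_not_mem_of_ne_top H htop
  have hxh₀ : x / h₀ ∈ H.multipliers := hO ▸ Subring.mem_top _
  exact hx (div_mul_cancel₀ x h₀_ne ▸ hxh₀ h₀ hh₀)

theorem mem_or_inv_mem_multipliers {K : Type*} [Field K] [LinearOrder K] [IsStrictOrderedRing K]
    {H : AddSubgroup K} (hH : (H : Set K).OrdConnected) (a : K) :
    a ∈ H.multipliers ∨ a⁻¹ ∈ H.multipliers := by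
  rcases le_total |a| 1 with ha | ha
  · exact .inl (mem_multipliers_of_abs_le_one hH ha)
  · refine .inr (mem_multipliers_of_abs_le_one hH ?_)
    rw [abs_inv]
    exact inv_le_one_of_one_le₀ ha

end AddSubgroup

open AddSubgroup in
/-- If `H` is a nontrivial convex additive subgroup of an ordered
field `K`, then `O = {a : K | aH ⊆ H}` is a convex subring of `K`, neither `{0}`
nor `K`, and `O` is a valuation ring: for nonzero `a`, `a ∈ O` or `a⁻¹ ∈ O`. -/
theorem stabilizer_convex_valuation_subring {K : Type*} [Field K] [LinearOrder K] [IsStrictOrderedRing K]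
    (H : AddSubgroup K)
    (hconv : ∀ a b c : K, a ∈ H → b ∈ H → a ≤ c → c ≤ b → c ∈ H)
    (hbot : H ≠ ⊥) (htop : H ≠ ⊤) :
    ∃ O : Subring K, (O : Set K) = {a : K | ∀ h ∈ H, a * h ∈ H} ∧
      (∀ a b c : K, a ∈ O → b ∈ O → a ≤ c → c ≤ b → c ∈ O) ∧
      (O : Set K) ≠ {0} ∧ O ≠ ⊤ ∧
      ∀ a : K, a ≠ 0 → a ∈ O ∨ a⁻¹ ∈ O := by
  have hH : (H : Set K).OrdConnected := ⟨fun a ha b hb _ hc => hconv a b _ ha hb hc.1 hc.2⟩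
  have hO_nontrivial : (H.multipliers : Set K).Nontrivial :=
    Set.nontrivial_of_mem_mem_ne H.multipliers.zero_mem H.multipliers.one_mem zero_ne_one
  refine ⟨H.multipliers, rfl, fun a b c ha hb hac hcb => ?_, hO_nontrivial.ne_singleton,
    multipliers_ne_top hbot htop, fun a _ => mem_or_inv_mem_multipliers hH a⟩
  exact (ordConnected_multipliers hH).out ha hb ⟨hac, hcb⟩
end

section
/- Let M be an abelian group with a dense archimedean cyclic group order C such that M/nM is infinite for some n ≥ 1. Then nM (and hence every coset of nM) is dense in M with respect to the cyclic order topology. -/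
namespace CG19

variable {M : Type*} [AddCommGroup M]

/-- Bundled hypotheses of a dense archimedean cyclic group order. -/
structure Cyc (C : M → M → M → Prop) : Prop where
  rot : ∀ a b c, C a b c → C b c a
  asym : ∀ a b c, C a b c → ¬ C c b a
  tra : ∀ a b c d, C a b c → C a c d → C a b d
  tot : ∀ a b c, a ≠ b → b ≠ c → a ≠ c → C a b c ∨ C c b a
  tinv : ∀ a b c d, C a b c → C (a + d) (b + d) (c + d)
  dens : ∀ a c, a ≠ c → ∃ b, C a b c
  arch : ¬ ∃ a b, ∀ n : ℕ, 1 ≤ n → C 0 (n • a) b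

namespace Cyc

variable {C : M → M → M → Prop} (S : Cyc C)

include S

lemma rot2 {a b c : M} (h : C a b c) : C c a b := S.rot _ _ _ (S.rot _ _ _ h)

lemma nself1 {a b : M} (h : C a a b) : False := S.asym a a b h (S.rot2 h)

lemma nself2 {a b : M} (h : C a b a) : False := S.asym a b a h h

lemma nself3 {a b : M} (h : C a b b) : False := S.nself2 (S.rot2 h)

lemma ne12 {a b c : M} (h : C a b c) : a ≠ b := fun e => S.nself1 (e ▸ h)

lemma ne23 {a b c : M} (h : C a b c) : b ≠ c := fun e => S.nself3 (e ▸ h)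

lemma ne13 {a b c : M} (h : C a b c) : a ≠ c := fun e => S.nself2 (e ▸ h)

lemma asym0 {a b : M} (h : C 0 a b) (h' : C 0 b a) : False :=
  S.asym 0 a b h (S.rot _ _ _ h')

lemma tot0 {a b : M} (ha : a ≠ 0) (hb : b ≠ 0) (hab : a ≠ b) :
    C 0 a b ∨ C 0 b a := by
  rcases S.tot 0 a b (Ne.symm ha) hab (Ne.symm hb) with h | h
  · exact Or.inl h
  · exact Or.inr (S.rot2 h)

/-- translation by subtraction -/
lemma tsub {a b c : M} (d : M) (h : C a b c) : C (a - d) (b - d) (c - d) := by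
  simpa [sub_eq_add_neg] using S.tinv a b c (-d) h

/-- `L1`: if `v ∈ (a,c)` and `y ∈ (v,c)` then `y ∈ (a,c)`. -/
lemma L1 {a v y c : M} (h : C a v c) (h' : C v y c) : C a y c :=
  S.rot _ _ _ (S.tra c a v y (S.rot2 h) (S.rot2 h'))

/-- `L2` -/
lemma L2 {a b c d : M} (h : C a b d) (h' : C b c d) : C a b c :=
  S.rot2 (S.tra b c d a h' (S.rot _ _ _ h))

/-- `L3`: if `v ∈ (a,c)` and `y ∈ (v,c)` then `v ∈ (a,y)`. -/
lemma L3 {a v y c : M} (h : C a v c) (h' : C v y c) : C a v y := by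
  have hay : C a y c := S.L1 h h'
  rcases S.tot a v y (S.ne12 h) (S.ne12 h') (S.ne12 hay) with hg | hb
  · exact hg
  · -- hb : C y v a
    have h1 : C v a y := S.rot _ _ _ hb
    have h2 : C v a c := S.tra v a y c h1 h'
    exact absurd (S.rot2 h2) (S.asym a v c h)

/-- between two points of the positive segment -/
lemma mid {a x b : M} (h : C 0 a x) (h' : C 0 x b) : C a x b :=
  S.L2 (S.rot _ _ _ h) (S.rot _ _ _ h')


/-- Negation reverses the cyclic order (base case, using archimedeanity). -/
lemma neg0 {b c : M} (h : C 0 b c) : C 0 (-c) (-b) := by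
  have hb0 : b ≠ 0 := (S.ne12 h).symm
  have hc0 : c ≠ 0 := (S.ne13 h).symm
  have hbc : b ≠ c := S.ne23 h
  suffices hs : C c 0 (c - b) by
    have := S.tsub c hs
    simpa [sub_sub_cancel_left] using this
  rcases S.tot c 0 (c - b) hc0 ((sub_ne_zero.mpr hbc.symm).symm)
      (fun e => hb0 (sub_eq_self.mp e.symm)) with hg | hbad
  · exact hg
  · exfalso
    have Y : C 0 c (c - b) := S.rot _ _ _ hbad
    have key : ∀ m : ℕ, 1 ≤ m → C 0 (m • b) c := by
      intro m hm
      induction m, hm using Nat.le_induction with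
      | base => simpa using h
      | succ m hm ih =>
        have h1 : C 0 (m • b) (c - b) := S.tra 0 (m • b) c (c - b) ih Y
        have h2 : C b (m • b + b) c := by
          have := S.tinv 0 (m • b) (c - b) b h1
          simpa [sub_add_cancel] using this
        exact S.L1 h (by simpa [succ_nsmul] using h2)
    exact S.arch ⟨b, c, key⟩

/-- Negation reverses the cyclic order. -/
lemma neg3 {a b c : M} (h : C a b c) : C (-c) (-b) (-a) := by
  have h0 : C 0 (b - a) (c - a) := by simpa using S.tsub a h
  have h1 : C 0 (-(c - a)) (-(b - a)) := S.neg0 h0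
  have h2 : C 0 (a - c) (a - b) := by simpa [neg_sub] using h1
  have h3 := S.tsub a h2
  have h4 : C (-a) (-c) (-b) := by simpa [sub_sub_cancel_left, zero_sub] using h3
  exact S.rot _ _ _ h4

/-- `0 ≺ a ≺ b` implies `0 ≺ b - a ≺ b`. -/
lemma subl {a b : M} (h : C 0 a b) : C 0 (b - a) b := by
  have ha0 : a ≠ 0 := (S.ne12 h).symm
  have hb0 : b ≠ 0 := (S.ne13 h).symm
  have hab : a ≠ b := S.ne23 h
  have d1 : b - a ≠ 0 := sub_ne_zero.mpr hab.symm
  have d2 : b - a ≠ b := by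
    intro e
    exact ha0 (by simpa using (sub_eq_self.mp e))
  rcases S.tot0 d1 hb0 d2 with hg | hbad
  · exact hg
  · exfalso
    -- hbad : C 0 b (b - a)
    have h1 : C (-b) 0 (-a) := by simpa [sub_sub_cancel_left] using S.tsub b hbad
    have h2 : C 0 (-a) (-b) := S.rot _ _ _ h1
    exact S.asym0 h2 (S.neg0 h)


/-- The multiples of a nonzero element cannot increase forever. -/
lemma wrap_aux {e : M} (he : e ≠ 0) :
    ¬ ∀ j : ℕ, C 0 ((j + 1) • e) ((j + 2) • e) := by
  intro incr
  have chain2 : ∀ j : ℕ, C 0 (1 • e) ((j + 2) • e) := by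
    intro j
    induction j with
    | zero => simpa using incr 0
    | succ j ih => exact S.tra _ _ _ _ ih (incr (j + 1))
  have key : ∀ m : ℕ, 1 ≤ m → C 0 (m • e) (-e) := by
    intro m hm
    obtain ⟨j, rfl⟩ := Nat.exists_eq_add_of_le hm
    have A : C 0 ((1 + j) • e) ((1 + j + 1) • e) := by
      have := incr j
      simpa [add_comm, add_assoc, add_left_comm] using this
    have B : C 0 e ((1 + j + 1) • e) := by
      have := chain2 j
      simpa [one_nsmul, add_comm, add_assoc, add_left_comm] using this
    have hm0 : (1 + j) • e ≠ 0 := (S.ne12 A).symm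
    have hne : (1 + j) • e ≠ -e := by
      intro hEq
      have h0 : (1 + j + 1) • e = 0 := by
        rw [succ_nsmul, hEq]; simp
      have := incr (j + 1)
      rw [show j + 1 + 1 = 1 + j + 1 by ring, h0] at this
      exact S.nself1 this
    rcases S.tot0 hm0 (neg_ne_zero.mpr he) hne with hg | hbad
    · exact hg
    · exfalso
      have h1 : C e 0 ((1 + j + 1) • e) := by
        have := S.tinv 0 (-e) ((1 + j) • e) e hbad
        simpa [succ_nsmul] using this
      exact S.asym0 B (S.rot _ _ _ h1)
  exact S.arch ⟨e, -e, key⟩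

/-- The wrapping index: multiples of `e` increase up to `K` and then wrap. -/
lemma wrap {e : M} (he : e ≠ 0) :
    ∃ K : ℕ, 1 ≤ K ∧ (∀ j, 1 ≤ j → j < K → C 0 (j • e) ((j + 1) • e)) ∧
      ¬ C 0 (K • e) ((K + 1) • e) := by
  have hP : ∃ k, ¬ C 0 ((k + 1) • e) ((k + 2) • e) := by
    by_contra hcon
    push_neg at hcon
    exact S.wrap_aux he hcon
  classical
  refine ⟨Nat.find hP + 1, by omega, ?_, ?_⟩
  · intro j hj1 hjK
    obtain ⟨i, rfl⟩ := Nat.exists_eq_add_of_le hj1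
    have hi : i < Nat.find hP := by omega
    have h' := not_not.mp (Nat.find_min hP hi)
    simpa [add_comm, add_assoc, add_left_comm] using h'
  · have h' := Nat.find_spec hP
    have e2 : Nat.find hP + 1 + 1 = Nat.find hP + 2 := by omega
    rw [e2]
    simpa [add_comm, add_assoc, add_left_comm] using h'


section Cover

variable {e : M} {K : ℕ}

lemma nzmul (he : e ≠ 0) (hinc : ∀ j, 1 ≤ j → j < K → C 0 (j • e) ((j + 1) • e)) :
    ∀ j, 1 ≤ j → j ≤ K → j • e ≠ 0 := by
  intro j hj1 hjK
  rcases lt_or_eq_of_le hjK with hlt | rfl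
  · exact (S.ne12 (hinc j hj1 hlt)).symm
  · rcases Nat.lt_or_ge 1 j with h2 | h1
    · have h := hinc (j - 1) (by omega) (by omega)
      have hj : j - 1 + 1 = j := by omega
      rw [hj] at h
      exact (S.ne13 h).symm
    · have : j = 1 := by omega
      subst this
      simpa using he

lemma monomul (hinc : ∀ j, 1 ≤ j → j < K → C 0 (j • e) ((j + 1) • e)) :
    ∀ i j, 1 ≤ i → i < j → j ≤ K → C 0 (i • e) (j • e) := by
  intro i j hi1 hij hjK
  induction j with
  | zero => omega
  | succ j ih =>
    rcases Nat.lt_or_ge i j with hlt | hge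
    · exact S.tra _ _ _ _ (ih (by omega) (by omega)) (hinc j (by omega) (by omega))
    · have : i = j := by omega
      subst this
      exact hinc i hi1 (by omega)

lemma wrapped (he : e ≠ 0) (hK1 : 1 ≤ K)
    (hinc : ∀ j, 1 ≤ j → j < K → C 0 (j • e) ((j + 1) • e))
    (hKw : ¬ C 0 (K • e) ((K + 1) • e)) :
    (K + 1) • e = 0 ∨ C 0 ((K + 1) • e) (K • e) := by
  by_cases h0 : (K + 1) • e = 0
  · exact Or.inl h0
  · right
    have hKne : K • e ≠ 0 := S.nzmul he hinc K hK1 le_rfl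
    have hne : (K + 1) • e ≠ K • e := by
      intro hEq
      rw [succ_nsmul] at hEq
      exact he (by simpa using hEq)
    rcases S.tot0 hKne h0 (Ne.symm hne) with hbad | hg
    · exact absurd hbad hKw
    · exact hg

lemma cover (he : e ≠ 0) (hK1 : 1 ≤ K)
    (hinc : ∀ j, 1 ≤ j → j < K → C 0 (j • e) ((j + 1) • e))
    (hKw : ¬ C 0 (K • e) ((K + 1) • e)) (x : M) :
    ∃ j : ℕ, j ≤ K + 1 ∧ (x = j • e ∨ (j ≤ K ∧ C (j • e) x ((j + 1) • e))) := by
  classical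
  by_cases hx : ∃ j ≤ K + 1, x = j • e
  · obtain ⟨j, hj, hxe⟩ := hx
    exact ⟨j, hj, Or.inl hxe⟩
  push_neg at hx
  have hx0 : x ≠ 0 := by simpa using hx 0 (by omega)
  by_cases h1x : C 0 x (1 • e)
  · refine ⟨0, by omega, Or.inr ⟨by omega, ?_⟩⟩
    simpa using h1x
  have hA1 : C 0 (1 • e) x := by
    rcases S.tot0 (by simpa using he) hx0 (fun hEq => hx 1 (by omega) hEq.symm) with hg | hb
    · exact hg
    · exact absurd hb h1x
  by_cases hAK : C 0 (K • e) x
  · -- last cell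
    refine ⟨K, by omega, Or.inr ⟨le_rfl, ?_⟩⟩
    rcases S.wrapped he hK1 hinc hKw with h0 | hw
    · rw [h0]
      exact S.rot _ _ _ hAK
    · exact S.rot _ _ _ (S.mid hw hAK)
  · -- find the minimal failure index
    have hEx : ∃ j, 1 ≤ j ∧ j ≤ K ∧ ¬ C 0 (j • e) x := ⟨K, hK1, le_rfl, hAK⟩
    obtain ⟨hj01, hj0K, hj0n⟩ := Nat.find_spec hEx
    have hj02 : 2 ≤ Nat.find hEx := by
      rcases Nat.lt_or_ge (Nat.find hEx) 2 with h | h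
      · exfalso
        have h1 : Nat.find hEx = 1 := by omega
        rw [h1] at hj0n
        exact hj0n hA1
      · exact h
    have hmin := Nat.find_min hEx (show Nat.find hEx - 1 < Nat.find hEx by omega)
    push_neg at hmin
    have hprev : C 0 ((Nat.find hEx - 1) • e) x := hmin (by omega) (by omega)
    have hBj0 : C 0 x (Nat.find hEx • e) := by
      rcases S.tot0 (S.nzmul he hinc (Nat.find hEx) (by omega) hj0K) hx0
          (fun hEq => hx (Nat.find hEx) (by omega) hEq.symm) with hg | hb
      · exact absurd hg hj0n
      · exact hb
    refine ⟨Nat.find hEx - 1, by omega, Or.inr ⟨by omega, ?_⟩⟩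
    have hre : Nat.find hEx - 1 + 1 = Nat.find hEx := by omega
    rw [hre]
    exact S.mid hprev hBj0

end Cover


/-- An infinite subgroup contains arbitrarily small nonzero elements. -/
lemma small (R : AddSubgroup M) (hR : Infinite R) {eps : M} (he : eps ≠ 0) :
    ∃ d : M, d ∈ R ∧ d ≠ 0 ∧ C 0 d eps := by
  classical
  obtain ⟨K, hK1, hinc, hKw⟩ := S.wrap he
  have cov' : ∀ x : M, ∃ j : ℕ, j ≤ K + 1 ∧
      (x = j • eps ∨ (j ≤ K ∧ C (j • eps) x ((j + 1) • eps))) :=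
    fun x => S.cover he hK1 hinc hKw x
  let f : R → Fin (K + 2) × Bool := fun r =>
    (⟨Nat.find (cov' ↑r), by have := (Nat.find_spec (cov' ↑r)).1; omega⟩,
      decide ((r : M) = Nat.find (cov' ↑r) • eps))
  obtain ⟨r, r', hne, hfeq⟩ := Finite.exists_ne_map_eq_of_infinite f
  have hj : Nat.find (cov' ↑r) = Nat.find (cov' ↑r') := by
    have := congrArg (fun p => (p.1 : ℕ)) hfeq
    simpa [f] using this
  have hbeq : decide ((r : M) = Nat.find (cov' ↑r) • eps)
      = decide ((r' : M) = Nat.find (cov' ↑r') • eps) := by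
    have := congrArg (fun p => p.2) hfeq
    simpa [f] using this
  by_cases hb : (r : M) = Nat.find (cov' ↑r) • eps
  · exfalso
    have hb2 : decide ((r' : M) = Nat.find (cov' ↑r') • eps) = true := by
      rw [← hbeq]; simpa using hb
    have hb' : (r' : M) = Nat.find (cov' ↑r') • eps := of_decide_eq_true hb2
    apply hne
    apply Subtype.ext
    rw [hb, hb', hj]
  · have hb2 : decide ((r' : M) = Nat.find (cov' ↑r') • eps) = false := by
      rw [← hbeq]; simpa using hb
    have hb' : (r' : M) ≠ Nat.find (cov' ↑r') • eps := of_decide_eq_false hb2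
    have hc : C (Nat.find (cov' ↑r) • eps) (↑r) ((Nat.find (cov' ↑r) + 1) • eps) := by
      rcases (Nat.find_spec (cov' ↑r)).2 with hEq | hcell
      · exact absurd hEq hb
      · exact hcell.2
    have hc' : C (Nat.find (cov' ↑r) • eps) (↑r') ((Nat.find (cov' ↑r) + 1) • eps) := by
      rcases (Nat.find_spec (cov' ↑r')).2 with hEq | hcell
      · exact absurd hEq (hj ▸ hb')
      · rw [hj]; exact hcell.2
    set j := Nat.find (cov' ↑r) with hjdef
    have hy : C 0 ((r : M) - j • eps) eps := by
      have := S.tsub (j • eps) hc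
      simpa [succ_nsmul, add_sub_cancel_left] using this
    have hy' : C 0 ((r' : M) - j • eps) eps := by
      have := S.tsub (j • eps) hc'
      simpa [succ_nsmul, add_sub_cancel_left] using this
    have hyy' : (r : M) - j • eps ≠ (r' : M) - j • eps := by
      intro hEq
      exact hne (Subtype.ext (by
        have := sub_left_injective hEq
        exact this))
    rcases S.tot0 ((S.ne12 hy).symm) ((S.ne12 hy').symm) hyy' with hlt | hlt
    · -- y ≺ y' : take d = y' - y = r' - r
      refine ⟨(r' : M) - (r : M), sub_mem r'.2 r.2, sub_ne_zero.mpr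
        (fun hEq => hne (Subtype.ext hEq.symm)), ?_⟩
      have := S.subl hlt
      have h2 : C 0 ((r' : M) - (r : M)) ((r' : M) - j • eps) := by
        simpa [sub_sub_sub_cancel_right] using this
      exact S.tra _ _ _ _ h2 hy'
    · refine ⟨(r : M) - (r' : M), sub_mem r.2 r'.2, sub_ne_zero.mpr
        (fun hEq => hne (Subtype.ext hEq)), ?_⟩
      have := S.subl hlt
      have h2 : C 0 ((r : M) - (r' : M)) ((r : M) - j • eps) := by
        simpa [sub_sub_sub_cancel_right] using this
      exact S.tra _ _ _ _ h2 hy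


/-- Stepping argument: a small positive element of `R` eventually lands in `(p,r)`. -/
lemma step (R : AddSubgroup M) {p r q d : M}
    (hstar : ∀ z ∈ R, ¬ C p z r)
    (h0pr : C 0 p r) (hq : C p q r)
    (hdR : d ∈ R) (hsm : C 0 d (q - p)) : False := by
  have h0pq : C 0 p q := S.L3 h0pr hq
  have hp0 : p ≠ 0 := (S.ne12 h0pr).symm
  have hsub : C 0 (q - p) q := S.subl h0pq
  have claim : ∀ k : ℕ, 1 ≤ k → C 0 (k • d) q := by
    intro k hk
    induction k, hk using Nat.le_induction with
    | base => simpa using S.tra _ _ _ _ hsm hsub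
    | succ k hk ih =>
      have hkd0 : k • d ≠ 0 := (S.ne12 ih).symm
      have hkdR : k • d ∈ R := nsmul_mem hdR k
      by_cases hkp : k • d = p
      · exfalso
        have hpd : C p (d + p) q := by
          have := S.tinv 0 d (q - p) p hsm
          simpa [sub_add_cancel] using this
        have hk1 : (k + 1) • d = d + p := by rw [succ_nsmul, hkp, add_comm]
        have h2 : C p ((k + 1) • d) r := S.tra _ _ _ _ (hk1 ▸ hpd) hq
        exact hstar _ (nsmul_mem hdR (k + 1)) h2
      by_cases hpk : C 0 p (k • d)
      · exact absurd (S.tra _ _ _ _ (S.mid hpk ih) hq) (hstar _ hkdR)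
      have hkdp : C 0 (k • d) p := by
        rcases S.tot0 hkd0 hp0 hkp with hg | hb
        · exact hg
        · exact absurd hb hpk
      have hkq : k • d ≠ q := by
        intro hEq
        exact hstar _ hkdR (hEq ▸ hq)
      have hq' : C 0 (q - p) (q - k • d) := by
        have d1 : q - p ≠ 0 := sub_ne_zero.mpr (S.ne23 h0pq).symm
        have d2 : q - k • d ≠ 0 := sub_ne_zero.mpr (Ne.symm hkq)
        have d3 : q - p ≠ q - k • d := fun hEq => hkp (sub_right_injective hEq).symm
        rcases S.tot0 d1 d2 d3 with hg | hbad
        · exact hg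
        · exfalso
          have hneg : C 0 (p - q) (k • d - q) := by
            simpa [neg_sub] using S.neg0 hbad
          have h2 : C q p (k • d) := by
            have := S.tinv 0 (p - q) (k • d - q) q hneg
            simpa [sub_add_cancel] using this
          exact hstar _ hkdR (S.tra _ _ _ _ (S.rot _ _ _ h2) hq)
      have h3 : C 0 d (q - k • d) := S.tra _ _ _ _ hsm hq'
      have h4 : C (k • d) ((k + 1) • d) q := by
        have := S.tinv 0 d (q - k • d) (k • d) h3
        simpa [succ_nsmul, add_comm, sub_add_cancel] using this
      exact S.L1 ih h4
  exact S.arch ⟨d, q, claim⟩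


/-- Every nonempty finite set of nonzero elements has a least element for the
linear order at `0`. -/
lemma minex (F : Finset M) (h0 : ∀ x ∈ F, x ≠ 0) (hne : F.Nonempty) :
    ∃ u ∈ F, ∀ y ∈ F, ¬ C 0 y u := by
  classical
  induction F using Finset.induction_on with
  | empty => exact absurd hne (by simp)
  | @insert a F haF ih =>
    rcases Finset.eq_empty_or_nonempty F with rfl | hFne
    · refine ⟨a, by simp, ?_⟩
      intro y hy
      simp only [Finset.mem_insert, Finset.notMem_empty, or_false] at hy
      subst hy
      exact fun hc => S.nself3 hc
    · obtain ⟨u, huF, hmin⟩ := ih (fun x hx => h0 x (Finset.mem_insert_of_mem hx)) hFne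
      by_cases hau : C 0 a u
      · refine ⟨a, Finset.mem_insert_self a F, ?_⟩
        intro y hy
        rcases Finset.mem_insert.mp hy with rfl | hyF
        · exact fun hc => S.nself3 hc
        · intro hc
          exact hmin y hyF (S.tra _ _ _ _ hc hau)
      · refine ⟨u, Finset.mem_insert_of_mem huF, ?_⟩
        intro y hy
        rcases Finset.mem_insert.mp hy with rfl | hyF
        · exact hau
        · exact hmin y hyF

end Cyc

/-- Reduction of integer multiples modulo the exponent. -/
lemma zred {A : Type*} [AddCommGroup A] {N : ℕ} (hN : 0 < N) {x : A}
    (hx : N • x = 0) (i : ℤ) : ∃ m : ℕ, m < N ∧ i • x = (m : ℤ) • x := by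
  refine ⟨(i % (N : ℤ)).toNat, by
    have h1 : i % (N : ℤ) < (N : ℤ) := Int.emod_lt_of_pos i (by exact_mod_cast hN)
    omega, ?_⟩
  have h0 : (0 : ℤ) ≤ i % (N : ℤ) := Int.emod_nonneg i (by exact_mod_cast hN.ne')
  rw [Int.toNat_of_nonneg h0]
  conv_lhs => rw [← Int.mul_ediv_add_emod i (N : ℤ)]
  rw [add_zsmul, mul_comm ((N : ℤ)) (i / (N : ℤ)), mul_zsmul, natCast_zsmul, hx]
  simp

namespace Cyc

variable {C : M → M → M → Prop} (S : Cyc C)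

include S

/-- Any two elements of a group of exponent `N` with a cyclic group order lie in a
common cyclic subgroup. -/
lemma paircyc (N : ℕ) (hN : 0 < N) (hexp : ∀ x : M, N • x = 0) (d e : M) :
    ∃ u : M, (∃ i j : ℤ, u = i • d + j • e) ∧
      ∀ z : M, (∃ i j : ℤ, z = i • d + j • e) → ∃ m : ℤ, z = m • u := by
  classical
  set F : Finset M :=
    (Finset.range N ×ˢ Finset.range N).image
      (fun ij => (ij.1 : ℤ) • d + (ij.2 : ℤ) • e) with hFdef
  have hPS : ∀ z : M, (∃ i j : ℤ, z = i • d + j • e) → z ∈ F := by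
    rintro z ⟨i, j, rfl⟩
    obtain ⟨a, haN, ha⟩ := zred hN (hexp d) i
    obtain ⟨b, hbN, hb⟩ := zred hN (hexp e) j
    rw [hFdef]
    refine Finset.mem_image.mpr ⟨(a, b), ?_, ?_⟩
    · exact Finset.mem_product.mpr ⟨Finset.mem_range.mpr haN, Finset.mem_range.mpr hbN⟩
    · rw [← ha, ← hb]
  have hSP : ∀ z ∈ F, ∃ i j : ℤ, z = i • d + j • e := by
    intro z hz
    rw [hFdef] at hz
    obtain ⟨ij, _, hv⟩ := Finset.mem_image.mp hz
    exact ⟨(ij.1 : ℤ), (ij.2 : ℤ), hv.symm⟩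
  by_cases hS0 : (F.erase 0).Nonempty
  · obtain ⟨u, huS0, humin⟩ :=
      S.minex (F.erase 0) (fun x hx => (Finset.mem_erase.mp hx).1) hS0
    have huF : u ∈ F := (Finset.mem_erase.mp huS0).2
    have hu0 : u ≠ 0 := (Finset.mem_erase.mp huS0).1
    refine ⟨u, hSP u huF, ?_⟩
    have main : ∀ k : ℕ, ∀ z : M, z ∈ F → (F.filter (fun y => C 0 y z)).card ≤ k →
        ∃ m : ℤ, z = m • u := by
      intro k
      induction k with
      | zero =>
        intro z hzF hrk
        by_cases hz0 : z = 0
        · exact ⟨0, by simp [hz0]⟩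
        by_cases hzu : z = u
        · exact ⟨1, by simp [hzu]⟩
        · exfalso
          have hnzu : ¬ C 0 z u := humin z (Finset.mem_erase.mpr ⟨hz0, hzF⟩)
          have huz : C 0 u z := by
            rcases S.tot0 hu0 hz0 (Ne.symm hzu) with hg | hb
            · exact hg
            · exact absurd hb hnzu
          have hsub : C 0 (z - u) z := S.subl huz
          have hzuF : z - u ∈ F := by
            obtain ⟨i, j, hi⟩ := hSP z hzF
            obtain ⟨i', j', hi'⟩ := hSP u huF
            refine hPS _ ⟨i - i', j - j', ?_⟩
            rw [hi, hi', sub_zsmul, sub_zsmul]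
            abel
          have hmem : z - u ∈ F.filter (fun y => C 0 y z) :=
            Finset.mem_filter.mpr ⟨hzuF, hsub⟩
          have := Finset.card_pos.mpr ⟨z - u, hmem⟩
          omega
      | succ k ih =>
        intro z hzF hrk
        by_cases hz0 : z = 0
        · exact ⟨0, by simp [hz0]⟩
        by_cases hzu : z = u
        · exact ⟨1, by simp [hzu]⟩
        · have hnzu : ¬ C 0 z u := humin z (Finset.mem_erase.mpr ⟨hz0, hzF⟩)
          have huz : C 0 u z := by
            rcases S.tot0 hu0 hz0 (Ne.symm hzu) with hg | hb
            · exact hg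
            · exact absurd hb hnzu
          have hsub : C 0 (z - u) z := S.subl huz
          have hzuF : z - u ∈ F := by
            obtain ⟨i, j, hi⟩ := hSP z hzF
            obtain ⟨i', j', hi'⟩ := hSP u huF
            refine hPS _ ⟨i - i', j - j', ?_⟩
            rw [hi, hi', sub_zsmul, sub_zsmul]
            abel
          have hss : (F.filter (fun y => C 0 y (z - u))) ⊂ (F.filter (fun y => C 0 y z)) := by
            refine (Finset.ssubset_iff_of_subset ?_).mpr ?_
            · intro y hy
              obtain ⟨hyF, hyc⟩ := Finset.mem_filter.mp hy
              exact Finset.mem_filter.mpr ⟨hyF, S.tra _ _ _ _ hyc hsub⟩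
            · refine ⟨z - u, Finset.mem_filter.mpr ⟨hzuF, hsub⟩, ?_⟩
              intro hc
              exact S.nself3 (Finset.mem_filter.mp hc).2
          have hlt := Finset.card_lt_card hss
          obtain ⟨m, hm⟩ := ih (z - u) hzuF (by omega)
          refine ⟨m + 1, ?_⟩
          rw [add_zsmul, one_zsmul, ← hm]
          abel
    exact fun z hz => main (F.filter (fun y => C 0 y z)).card z (hPS z hz) le_rfl
  · refine ⟨0, ⟨0, 0, by simp⟩, ?_⟩
    intro z hz
    refine ⟨0, ?_⟩
    have hzF := hPS z hz
    by_cases hz0 : z = 0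
    · simp [hz0]
    · exact absurd ⟨z, Finset.mem_erase.mpr ⟨hz0, hzF⟩⟩ hS0

/-- Any finite list of elements of a bounded-exponent group with cyclic order lies
in a common cyclic subgroup. -/
lemma listcyc (N : ℕ) (hN : 0 < N) (hexp : ∀ x : M, N • x = 0) :
    ∀ L : List M, ∃ u : M, ∀ z ∈ L, ∃ m : ℤ, z = m • u := by
  intro L
  induction L with
  | nil => exact ⟨0, by simp⟩
  | cons a L ih =>
    obtain ⟨u', hu'⟩ := ih
    obtain ⟨u, _, hu⟩ := S.paircyc N hN hexp a u'
    refine ⟨u, ?_⟩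
    intro z hz
    rcases List.mem_cons.mp hz with rfl | hzL
    · exact hu z ⟨1, 0, by simp⟩
    · obtain ⟨m, hm⟩ := hu' z hzL
      exact hu z ⟨0, m, by simp [hm]⟩

end Cyc

end CG19

/-- Let `C` be a dense archimedean cyclic group order on an abelian
group `M` such that `M/nM` is infinite for some `n ≥ 1`. Then `nM` (and hence
every coset of `nM`) is dense in `M`: it meets every nonempty open interval for
the cyclic order. -/
theorem coset_dense_of_infinite_quotient {M : Type*} [AddCommGroup M]
    (C : M → M → M → Prop)
    (h1 : ∀ a b c : M, C a b c → C b c a)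
    (h2 : ∀ a b c : M, C a b c → ¬ C c b a)
    (h3 : ∀ a b c d : M, C a b c → C a c d → C a b d)
    (h4 : ∀ a b c : M, a ≠ b → b ≠ c → a ≠ c → C a b c ∨ C c b a)
    (h5 : ∀ a b c d : M, C a b c → C (a + d) (b + d) (c + d))
    -- density of the cyclic order: every open interval with distinct endpoints is nonempty
    (hdense : ∀ a c : M, a ≠ c → ∃ b : M, C a b c)
    -- archimedean: there are no `a, b` with `C 0 (n • a) b` for all `n ≥ 1`
    (harch : ¬ ∃ a b : M, ∀ n : ℕ, 1 ≤ n → C 0 (n • a) b)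
    (n : ℕ) (hn : 1 ≤ n)
    (hinf : Infinite (M ⧸ (zsmulAddGroupHom ((n : ℤ)) (α := M)).range)) :
    ∀ g a c : M, a ≠ c →
      ∃ b : M, C a b c ∧ b - g ∈ (zsmulAddGroupHom ((n : ℤ)) (α := M)).range := by
  classical
  set R : AddSubgroup M := (zsmulAddGroupHom ((n : ℤ)) (α := M)).range with hRdef
  have S : CG19.Cyc C := ⟨h1, h2, h3, h4, h5, hdense, harch⟩
  have hsub : ∀ p r : M, p ≠ r → ∃ z ∈ R, C p z r := by
    intro p r hpr
    by_contra hcon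
    push_neg at hcon
    obtain ⟨u1, hu1⟩ := hdense p r hpr
    obtain ⟨u2, hu2⟩ := hdense u1 r (S.ne23 hu1)
    have hsubint : ∀ z, C u1 z u2 → C p z r :=
      fun z hz => S.L1 hu1 (S.tra u1 z u2 r hz hu2)
    have hstar : ∀ z ∈ R, ¬ C u1 z u2 := fun z hzR hz => hcon z hzR (hsubint z hz)
    have h00 : ¬ C p 0 r := hcon 0 (zero_mem R)
    have hu10 : u1 ≠ 0 := fun e => h00 (e ▸ hu1)
    have hu20 : u2 ≠ 0 := fun e => h00 (e ▸ (S.L1 hu1 hu2))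
    have hu12 : u1 ≠ u2 := S.ne12 hu2
    have h0pr : C 0 u1 u2 := by
      rcases S.tot u1 0 u2 hu10 (Ne.symm hu20) hu12 with hb | hg
      · exact absurd (hsubint 0 hb) h00
      · exact S.rot _ _ _ hg
    obtain ⟨q, hq⟩ := hdense u1 u2 hu12
    rcases finite_or_infinite R with hfin | hinfR
    · -- `R` finite: `M` has bounded exponent, contradiction with the infinite quotient
      have hc1 : 0 < Nat.card R := Nat.card_pos
      set N : ℕ := n * Nat.card R with hNdef
      have hN : 0 < N := Nat.mul_pos hn hc1
      have hexp : ∀ x : M, N • x = 0 := by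
        intro x
        have hmem : n • x ∈ R := by
          refine ⟨x, ?_⟩
          simp [natCast_zsmul]
        have hz : Nat.card R • (⟨n • x, hmem⟩ : R) = 0 := card_nsmul_eq_zero'
        have hz' : Nat.card R • (n • x) = 0 := Subtype.ext_iff.mp hz
        rw [hNdef, mul_nsmul, hz']
      set emb : ℕ ↪ M ⧸ R := Infinite.natEmbedding (M ⧸ R) with hembdef
      have hlift : ∀ i : Fin (n + 1), ∃ x : M, (x : M ⧸ R) = emb i :=
        fun i => QuotientAddGroup.mk_surjective (emb i)
      choose x hx using hlift
      obtain ⟨u, hu⟩ := S.listcyc N hN hexp ((List.finRange (n + 1)).map x)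
      have hxi : ∀ i : Fin (n + 1), ∃ m : ℤ, x i = m • u := by
        intro i
        exact hu (x i) (List.mem_map.mpr ⟨i, List.mem_finRange i, rfl⟩)
      choose mm hmm using hxi
      have hqu : n • ((u : M ⧸ R)) = 0 := by
        have hmem : (n : ℤ) • u ∈ R := ⟨u, by simp⟩
        have : (((n : ℤ) • u : M) : M ⧸ R) = 0 := (QuotientAddGroup.eq_zero_iff _).mpr hmem
        rw [← this, ← natCast_zsmul]
        exact (QuotientAddGroup.mk_zsmul R u (n : ℤ)).symm ▸ rfl
      have hclass : ∀ i : Fin (n + 1), emb i = mm i • ((u : M ⧸ R)) := by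
        intro i
        rw [← hx i, hmm i]
        exact QuotientAddGroup.mk_zsmul R u (mm i)
      have hres : ∀ i : Fin (n + 1), ∃ m : ℕ, m < n ∧ emb i = (m : ℤ) • ((u : M ⧸ R)) := by
        intro i
        obtain ⟨m, hmN, hmEq⟩ := CG19.zred hn hqu (mm i)
        exact ⟨m, hmN, by rw [hclass i, hmEq]⟩
      choose res hresN hresEq using hres
      have hcard : Fintype.card (Fin n) < Fintype.card (Fin (n + 1)) := by simp
      obtain ⟨i, i', hii, hfeq⟩ :=
        Fintype.exists_ne_map_eq_of_card_lt (fun i : Fin (n + 1) => (⟨res i, hresN i⟩ : Fin n))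
          hcard
      have : emb i = emb i' := by
        rw [hresEq i, hresEq i']
        have : res i = res i' := congrArg Fin.val hfeq
        rw [this]
      exact hii (Fin.val_injective (emb.injective this))
    · -- `R` infinite: small elements plus the stepping argument
      have hqp : q - u1 ≠ 0 := sub_ne_zero.mpr (S.ne12 hq).symm
      obtain ⟨d, hdR, hd0, hsm⟩ := S.small R hinfR hqp
      exact S.step R hstar h0pr hq hdR hsm
  intro g a c hac
  obtain ⟨z, hzR, hz⟩ := hsub (a - g) (c - g)
    (fun e => hac (by have := sub_left_injective e; exact this))
  refine ⟨z + g, ?_, by simpa using hzR⟩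
  have := h5 (a - g) z (c - g) g hz
  simpa [sub_add_cancel] using this
end
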